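/- (S_3, S_2^≠, [1/4, 1/2), [0, ∞))↓ holds: from every configuration in which robot r is in state S_3 with observed distance in [1/4, 1/2) and robot s satisfies condition S_2^≠ with any observed distance, every fair SSynch execution of Algorithm 1 solves rendezvous. -/

import Mathlib

/-- Points in the plane. -/
abbrev Pt := EuclideanSpace ℝ (Fin 2)

/-- Observed directions. -/
inductive Dir | left | right
deriving DecidableEq

/-- The six internal states of Algorithm 1. -/
inductive St | start | s1 | s2 (d : Dir) | s3 | finish
deriving DecidableEq

/-- A local coordinate frame: an orthogonal linear map of the plane. -/
abbrev Frame := Pt ≃ₗᵢ[ℝ] Pt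

/-- Observed direction of a local vector `v`: `right` if its first coordinate is
positive, or is zero with positive second coordinate; `left` otherwise. -/
noncomputable def obsDir (v : Pt) : Dir :=
  if 0 < v 0 ∨ (v 0 = 0 ∧ 0 < v 1) then Dir.right else Dir.left

/-- Local vector observed by a robot with unit distance `u` and frame `A`,
located at `p`, looking at the other robot at `q`. -/
noncomputable def obsVec (u : ℝ) (A : Frame) (p q : Pt) : Pt := u⁻¹ • (A (q - p))

/-- Observed distance. -/
noncomputable def obsDist (u : ℝ) (p q : Pt) : ℝ := ‖q - p‖ / u

/-- Algorithm 1: given the current state, the observed distance `d` and the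
observed direction `dir`, returns the new state and the coefficient `μ` such
that the (global) destination is `p + μ • (q - p)` (i.e. local destination `μ • v`). -/
noncomputable def algo1 (s : St) (d : ℝ) (dir : Dir) : St × ℝ :=
  if d = 0 then (s, 0)
  else match s with
  | .start => if d < 1 then (.s1, 1 - 1/d) else (.s2 dir, 1)
  | .s1 => if d ≤ 1 then (.finish, 0) else (.s2 dir, 1)
  | .s2 d' =>
      if dir = d' then (.finish, 1)
      else if d < 1/2 then (.finish, 0)
      else if d < 1 then (.s3, 1/2)
      else (.s2 d', 1/2)
  | .s3 => if d < 1/4 then (.finish, 0) else (.finish, 1)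
  | .finish => if d ≤ 1 then (.finish, 0) else (.finish, 1)

/-- A configuration: positions and internal states of the two robots
(robot `r` is `false`, robot `s` is `true`). -/
structure Config where
  pos : Bool → Pt
  st : Bool → St

/-- Result (new position, new state) of one activation of robot `i`. -/
noncomputable def stepRobot (u : Bool → ℝ) (A : Bool → Frame) (c : Config) (i : Bool) :
    Pt × St :=
  let p := c.pos i
  let q := c.pos (!i)
  let d := obsDist (u i) p q
  let dir := obsDir (obsVec (u i) (A i) p q)
  let r := algo1 (c.st i) d dir
  (p + r.2 • (q - p), r.1)

/-- One synchronous round in which exactly the robots `i` with `act i = true`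
are activated; both activated robots observe the same (pre-round) configuration,
and rigidly reach their computed destinations. -/
noncomputable def stepConfig (u : Bool → ℝ) (A : Bool → Frame) (act : Bool → Bool)
    (c : Config) : Config where
  pos i := if act i then (stepRobot u A c i).1 else c.pos i
  st i := if act i then (stepRobot u A c i).2 else c.st i

/-- The configuration after `n` rounds of the SSynch execution of Algorithm 1
under schedule `sched`, starting from `c0`. -/
noncomputable def run (u : Bool → ℝ) (A : Bool → Frame) (sched : ℕ → Bool → Bool)
    (c0 : Config) : ℕ → Config
  | 0 => c0
  | n + 1 => stepConfig u A (sched n) (run u A sched c0 n)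

/-- A legal fair SSynch schedule: at every round a nonempty set of robots is
activated, and each robot is activated infinitely often. -/
def FairSched (sched : ℕ → Bool → Bool) : Prop :=
  (∀ n, sched n false = true ∨ sched n true = true) ∧
  (∀ i n, ∃ m, n ≤ m ∧ sched m i = true)

/-- Rendezvous is solved: from some round on, the two robots occupy the same
point and never move again. -/
noncomputable def Solves (u : Bool → ℝ) (A : Bool → Frame) (sched : ℕ → Bool → Bool)
    (c0 : Config) : Prop :=
  ∃ N : ℕ, ∀ n, N ≤ n → ∀ i, (run u A sched c0 n).pos i = (run u A sched c0 N).pos false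

/-- Conditions on a robot: one of the six internal states, or `S₂⁼` / `S₂≠`. -/
inductive Cond | start | s1 | s2 (d : Dir) | s2eq | s2ne | s3 | finish

/-- A robot in state `s` whose currently observed direction is `dir`
satisfies the condition. -/
def Cond.sat : Cond → St → Dir → Prop
  | .start, s, _ => s = .start
  | .s1, s, _ => s = .s1
  | .s2 d', s, _ => s = .s2 d'
  | .s2eq, s, dir => s = .s2 dir
  | .s2ne, s, dir => ∃ d', s = St.s2 d' ∧ d' ≠ dir
  | .s3, s, _ => s = .s3
  | .finish, s, _ => s = .finish

/-- `(S_a, S_b, I_a, I_b)↓` : for every choice of the units and frames, from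
every configuration in which robot `r` satisfies condition `Ca` with observed
distance in `Ia` and robot `s` satisfies condition `Cb` with observed distance
in `Ib`, every fair SSynch execution of Algorithm 1 solves Rendezvous. -/
noncomputable def Down (Ca Cb : Cond) (Ia Ib : Set ℝ) : Prop :=
  ∀ (u : Bool → ℝ) (A : Bool → Frame), (∀ i, 0 < u i) →
    ∀ c0 : Config,
      Ca.sat (c0.st false)
        (obsDir (obsVec (u false) (A false) (c0.pos false) (c0.pos true))) →
      obsDist (u false) (c0.pos false) (c0.pos true) ∈ Ia →
      Cb.sat (c0.st true)
        (obsDir (obsVec (u true) (A true) (c0.pos true) (c0.pos false))) →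
      obsDist (u true) (c0.pos true) (c0.pos false) ∈ Ib →
      ∀ sched : ℕ → Bool → Bool, FairSched sched → Solves u A sched c0

/-!
Both robots only ever move along the segment joining them, so a round multiplies the vector
between them by `t = 1 - μ_r - μ_s`: observed distances scale by `|t|`, observed directions
flip exactly when `t < 0`. Robot `r`, in `S_3` at distance `≥ 1/4`, jumps onto `s` at its
first activation. Once `s` has moved, `r` is passive (in `S_finish` at distance `≤ 1`, or in
`S_3` at distance `< 1/4`) and never moves again. Meanwhile `s` halves the distance at each
activation while it stays in `S_2^≠` at distance `≥ 1`, until it reaches `S_3` at distance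
`≥ 1/4`, or sees `r` on its recorded side after `r` jumped over it; its next activation then
brings it onto `r`. Fairness guarantees that every awaited activation happens.
-/

lemma obsDir_smul_of_pos {t : ℝ} (ht : 0 < t) (v : Pt) : obsDir (t • v) = obsDir v := by
  simp only [obsDir, PiLp.smul_apply, smul_eq_mul, mul_pos_iff_of_pos_left ht, mul_eq_zero,
    ht.ne', false_or]

lemma obsDir_neg_ne {v : Pt} (hv : v ≠ 0) : obsDir (-v) ≠ obsDir v := by
  unfold obsDir
  simp only [PiLp.neg_apply, neg_pos, neg_eq_zero]
  rcases lt_trichotomy (v 0) 0 with h0 | h0 | h0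
  · simp [h0, h0.ne, h0.not_gt]
  · rcases lt_trichotomy (v 1) 0 with h1 | h1 | h1
    · simp [h0, h1, h1.not_gt]
    · exact absurd (by ext i; fin_cases i <;> simp [h0, h1]) hv
    · simp [h0, h1, h1.not_gt]
  · simp [h0, h0.ne', h0.not_gt]

lemma obsDir_smul_of_neg {t : ℝ} (ht : t < 0) {v : Pt} (hv : v ≠ 0) :
    obsDir (t • v) ≠ obsDir v := by
  rw [← neg_neg t, neg_smul, ← smul_neg, obsDir_smul_of_pos (neg_pos.mpr ht)]
  exact obsDir_neg_ne hv

lemma Dir.eq_of_ne_of_ne {a b c : Dir} (hab : a ≠ b) (hcb : c ≠ b) : a = c := by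
  cases a <;> cases b <;> cases c <;> simp_all

lemma abs_mul_le_max {t : ℝ} (ht : |t| ≤ 1) (x : ℝ) : |t| * x ≤ max x 0 := by
  rcases le_total 0 x with hx | hx
  · exact le_max_of_le_left (mul_le_of_le_one_left hx ht)
  · exact le_max_of_le_right (mul_nonpos_of_nonneg_of_nonpos (abs_nonneg t) hx)

section Algorithm

variable {s : St} {d : ℝ} {dir d' : Dir}

lemma algo1_of_eq_zero : algo1 s 0 dir = (s, 0) := by
  simp [algo1]

lemma algo1_finish_of_le_one (hd : d ≤ 1) : algo1 .finish d dir = (.finish, 0) := by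
  unfold algo1; split_ifs <;> rfl

lemma algo1_s3_of_quarter_le (hd : 1/4 ≤ d) : algo1 .s3 d dir = (.finish, 1) := by
  unfold algo1; split_ifs <;> first | rfl | linarith

lemma algo1_s3_of_lt_quarter (hd : d < 1/4) : (algo1 .s3 d dir).2 = 0 := by
  unfold algo1; split_ifs <;> rfl

lemma algo1_s2_self (hd : d ≠ 0) : algo1 (.s2 dir) d dir = (.finish, 1) := by
  simp [algo1, hd]

lemma algo1_s2_of_lt_half (hd : d ≠ 0) (hd' : d < 1/2) (h : dir ≠ d') :
    algo1 (.s2 d') d dir = (.finish, 0) := by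
  simp only [algo1, if_neg hd, if_neg h, if_pos hd']

lemma algo1_s2_of_lt_one (hd : 1/2 ≤ d) (hd' : d < 1) (h : dir ≠ d') :
    algo1 (.s2 d') d dir = (.s3, 1/2) := by
  simp only [algo1, if_neg (by positivity : d ≠ 0), if_neg h, if_neg (not_lt.mpr hd), if_pos hd']

lemma algo1_s2_of_one_le (hd : 1 ≤ d) (h : dir ≠ d') :
    algo1 (.s2 d') d dir = (.s2 d', 1/2) := by
  simp only [algo1, if_neg (by positivity : d ≠ 0), if_neg h, if_neg (by linarith : ¬ d < 1/2),
    if_neg (not_lt.mpr hd)]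

end Algorithm

def Config.gap (c : Config) : Pt := c.pos true - c.pos false

section Observation

variable (u : Bool → ℝ) (A : Bool → Frame)

noncomputable def seenDist (c : Config) (i : Bool) : ℝ := obsDist (u i) (c.pos i) (c.pos (!i))

noncomputable def seenDir (c : Config) (i : Bool) : Dir :=
  obsDir (obsVec (u i) (A i) (c.pos i) (c.pos (!i)))

noncomputable def decision (c : Config) (i : Bool) : St × ℝ :=
  algo1 (c.st i) (seenDist u c i) (seenDir u A c i)

/-- An idle robot counts as deciding to keep its state and not move. -/
noncomputable def roundDecision (act : Bool → Bool) (c : Config) (i : Bool) : St × ℝ :=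
  if act i then decision u A c i else (c.st i, 0)

variable {u A} {c c' : Config} {t : ℝ}

lemma pos_sub_pos_of_gap_eq_smul (h : c'.gap = t • c.gap) (i : Bool) :
    c'.pos (!i) - c'.pos i = t • (c.pos (!i) - c.pos i) := by
  cases i
  · exact h
  · rw [Bool.not_true, ← neg_sub, ← neg_sub (c.pos true)]
    exact (congrArg Neg.neg h).trans (smul_neg t _).symm

lemma seenDist_of_gap_eq_smul (h : c'.gap = t • c.gap) (i : Bool) :
    seenDist u c' i = |t| * seenDist u c i := by
  rw [seenDist, seenDist, obsDist, obsDist, pos_sub_pos_of_gap_eq_smul h, norm_smul,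
    Real.norm_eq_abs, mul_div_assoc]

lemma obsVec_of_gap_eq_smul (h : c'.gap = t • c.gap) (i : Bool) :
    obsVec (u i) (A i) (c'.pos i) (c'.pos (!i)) =
      t • obsVec (u i) (A i) (c.pos i) (c.pos (!i)) := by
  rw [obsVec, obsVec, pos_sub_pos_of_gap_eq_smul h, map_smul, smul_comm]

lemma seenDir_of_gap_eq_smul_of_pos (h : c'.gap = t • c.gap) (ht : 0 < t) (i : Bool) :
    seenDir u A c' i = seenDir u A c i := by
  rw [seenDir, seenDir, obsVec_of_gap_eq_smul h, obsDir_smul_of_pos ht]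

lemma seenDir_of_gap_eq_smul_of_neg (h : c'.gap = t • c.gap) (ht : t < 0) {i : Bool}
    (hd : seenDist u c i ≠ 0) : seenDir u A c' i ≠ seenDir u A c i := by
  rw [seenDist, obsDist, div_ne_zero_iff, norm_ne_zero_iff] at hd
  rw [seenDir, seenDir, obsVec_of_gap_eq_smul h]
  exact obsDir_smul_of_neg ht (smul_ne_zero (inv_ne_zero hd.2) ((A i).map_ne_zero_iff.mpr hd.1))

lemma decision_of_gap_eq (h : c'.gap = c.gap) {i : Bool} (hst : c'.st i = c.st i) :
    decision u A c' i = decision u A c i := by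
  have h' : c'.gap = (1 : ℝ) • c.gap := by rw [h, one_smul]
  rw [decision, decision, hst, seenDist_of_gap_eq_smul h', abs_one, one_mul,
    seenDir_of_gap_eq_smul_of_pos h' one_pos]

lemma seenDist_eq_norm_gap_div (i : Bool) : seenDist u c i = ‖c.gap‖ / u i := by
  cases i
  · rfl
  · exact congrArg (· / u true) (norm_sub_rev _ _)

lemma seenDist_ne_zero_of_ne_zero {i j : Bool} (hu : u j ≠ 0) (hd : seenDist u c i ≠ 0) :
    seenDist u c j ≠ 0 := by
  rw [seenDist_eq_norm_gap_div, div_ne_zero_iff] at hd ⊢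
  exact ⟨hd.1, hu⟩

end Observation

section Round

variable {u : Bool → ℝ} {A : Bool → Frame} {act : Bool → Bool} {c : Config}

lemma roundDecision_of_act {i : Bool} (h : act i = true) :
    roundDecision u A act c i = decision u A c i :=
  if_pos h

lemma roundDecision_of_not_act {i : Bool} (h : act i = false) :
    roundDecision u A act c i = (c.st i, 0) := by
  simp [roundDecision, h]

lemma stepConfig_st (i : Bool) : (stepConfig u A act c).st i = (roundDecision u A act c i).1 := by
  simp only [stepConfig, roundDecision]
  split <;> rfl

lemma stepConfig_pos (i : Bool) :
    (stepConfig u A act c).pos i =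
      c.pos i + (roundDecision u A act c i).2 • (c.pos (!i) - c.pos i) := by
  simp only [stepConfig, roundDecision]
  split
  · rfl
  · rw [zero_smul, add_zero]

lemma stepConfig_gap (j : Bool) :
    (stepConfig u A act c).gap =
      (1 - (roundDecision u A act c j).2 - (roundDecision u A act c (!j)).2) • c.gap := by
  cases j <;>
  · simp only [Config.gap, stepConfig_pos, Bool.not_true, Bool.not_false]
    module

lemma stepConfig_of_gap_eq_zero (h : c.gap = 0) : stepConfig u A act c = c := by
  have hdec : ∀ i, roundDecision u A act c i = (c.st i, 0) := by
    intro i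
    unfold roundDecision
    split
    · rw [decision, seenDist_eq_norm_gap_div, h, norm_zero, zero_div, algo1_of_eq_zero]
    · rfl
  have hpos : (stepConfig u A act c).pos = c.pos :=
    funext fun i => by rw [stepConfig_pos, hdec, zero_smul, add_zero]
  have hst : (stepConfig u A act c).st = c.st := funext fun i => by rw [stepConfig_st, hdec]
  change Config.mk (stepConfig u A act c).pos (stepConfig u A act c).st = c
  rw [hpos, hst]

end Round

section Execution

variable (u : Bool → ℝ) (A : Bool → Frame)

def SolvesFrom (c : Config) : Prop := ∀ sched, FairSched sched → Solves u A sched c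

variable {u A} {sched : ℕ → Bool → Bool} {c : Config}

lemma run_succ_eq_run_tail (n : ℕ) :
    run u A sched c (n + 1) = run u A (fun k => sched (k + 1)) (stepConfig u A (sched 0) c) n := by
  induction n with
  | zero => rfl
  | succ n ih => rw [run, ih]; rfl

lemma FairSched.tail (h : FairSched sched) : FairSched fun k => sched (k + 1) := by
  refine ⟨fun n => h.1 (n + 1), fun i n => ?_⟩
  obtain ⟨m, hm, hsched⟩ := h.2 i (n + 1)
  refine ⟨m - 1, by omega, ?_⟩
  show sched (m - 1 + 1) i = true
  rwa [Nat.sub_add_cancel (by omega)]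

lemma Solves.of_tail (h : Solves u A (fun k => sched (k + 1)) (stepConfig u A (sched 0) c)) :
    Solves u A sched c := by
  obtain ⟨N, hN⟩ := h
  refine ⟨N + 1, fun n hn i => ?_⟩
  obtain ⟨m, rfl⟩ := Nat.exists_eq_add_of_le' (by omega : 1 ≤ n)
  rw [run_succ_eq_run_tail, run_succ_eq_run_tail]
  exact hN m (by omega) i

lemma SolvesFrom.of_gap_eq_zero (h : c.gap = 0) : SolvesFrom u A c := by
  intro sched _
  have hrun : ∀ n, run u A sched c n = c := by
    intro n
    induction n with
    | zero => rfl
    | succ n ih => rw [run, ih, stepConfig_of_gap_eq_zero h]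
  refine ⟨0, fun n _ i => ?_⟩
  rw [hrun, hrun]
  cases i
  · rfl
  · exact sub_eq_zero.mp h

lemma SolvesFrom.of_step
    (h : ∀ act, act false = true ∨ act true = true → SolvesFrom u A (stepConfig u A act c)) :
    SolvesFrom u A c :=
  fun _ hf => Solves.of_tail (h _ (hf.1 0) _ hf.tail)

lemma SolvesFrom.of_invariant (P : Config → Prop) (i : Bool)
    (hidle : ∀ c act, P c → act i = false → P (stepConfig u A act c))
    (hact : ∀ c act, P c → act i = true → SolvesFrom u A (stepConfig u A act c))
    (c : Config) (hc : P c) : SolvesFrom u A c := by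
  intro sched hf
  obtain ⟨m, -, hm⟩ := hf.2 i 0
  induction m generalizing c sched with
  | zero => exact Solves.of_tail (hact c _ hc hm _ hf.tail)
  | succ m ih =>
    apply Solves.of_tail
    cases h0 : sched 0 i
    · exact ih _ (hidle c _ hc h0) _ hf.tail hm
    · exact hact c _ hc h0 _ hf.tail

end Execution

section Passive

variable {u : Bool → ℝ} {A : Bool → Frame} {act : Bool → Bool} {c : Config} {i : Bool}

/-- Robot `i` will not move again as long as the robots do not get farther apart. -/
def Passive (u : Bool → ℝ) (c : Config) (i : Bool) : Prop :=
  (c.st i = .finish ∧ seenDist u c i ≤ 1) ∨ (c.st i = .s3 ∧ seenDist u c i < 1/4)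

lemma Passive.roundDecision_snd (h : Passive u c i) : (roundDecision u A act c i).2 = 0 := by
  unfold roundDecision
  split
  · rcases h with ⟨hs, hd⟩ | ⟨hs, hd⟩
    · rw [decision, hs, algo1_finish_of_le_one hd]
    · rw [decision, hs, algo1_s3_of_lt_quarter hd]
  · rfl

lemma Passive.roundDecision_fst (h : Passive u c i) :
    (roundDecision u A act c i).1 = c.st i ∨ (roundDecision u A act c i).1 = .finish := by
  unfold roundDecision decision
  split
  · rcases h with ⟨hs, -⟩ | ⟨hs, -⟩ <;> rw [hs] <;> unfold algo1 <;> split_ifs <;> simp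
  · exact Or.inl rfl

lemma Passive.stepConfig {t : ℝ} (h : Passive u c i)
    (hgap : (stepConfig u A act c).gap = t • c.gap) (ht : |t| ≤ 1) :
    Passive u (stepConfig u A act c) i := by
  have hd := (seenDist_of_gap_eq_smul (u := u) hgap i).trans_le (abs_mul_le_max ht _)
  have hst := h.roundDecision_fst (A := A) (act := act)
  rw [Passive, stepConfig_st]
  rcases h with ⟨hs, hd'⟩ | ⟨hs, hd'⟩
  · exact Or.inl ⟨hst.elim (·.trans hs) id, hd.trans (max_le hd' zero_le_one)⟩
  · rcases hst with hst | hst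
    · exact Or.inr ⟨hst.trans hs, hd.trans_lt (max_lt hd' (by norm_num))⟩
    · exact Or.inl ⟨hst, hd.trans (max_le (by linarith) zero_le_one)⟩

end Passive

section Rendezvous

variable {u : Bool → ℝ} {A : Bool → Frame}

lemma SolvesFrom.of_passive_of_jump (j : Bool) (c : Config) (hp : Passive u c j)
    (hjump : (decision u A c (!j)).2 = 1) : SolvesFrom u A c := by
  refine SolvesFrom.of_invariant (fun c => Passive u c j ∧ (decision u A c (!j)).2 = 1) (!j)
    ?_ ?_ c ⟨hp, hjump⟩
  · rintro c act ⟨hp, hjump⟩ hidle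
    have hgap : (stepConfig u A act c).gap = (1 : ℝ) • c.gap := by
      rw [stepConfig_gap j, hp.roundDecision_snd, roundDecision_of_not_act hidle, sub_zero,
        sub_zero]
    refine ⟨hp.stepConfig hgap (by norm_num), ?_⟩
    rwa [decision_of_gap_eq (hgap.trans (one_smul _ _))
      (by rw [stepConfig_st, roundDecision_of_not_act hidle])]
  · rintro c act ⟨hp, hjump⟩ hact
    apply SolvesFrom.of_gap_eq_zero
    rw [stepConfig_gap j, hp.roundDecision_snd, roundDecision_of_act hact, hjump, sub_zero,
      sub_self, zero_smul]

/-- One halving of robot `s`, which stays in `S_2^≠` only if it was at distance at least `1`. -/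
lemma SolvesFrom.of_passive_of_s2ne_of_halving (D : ℝ) (hD : 1/2 ≤ D)
    (hhalf : 1 ≤ D → ∀ c, Passive u c false →
      Cond.s2ne.sat (c.st true) (seenDir u A c true) → seenDist u c true = D / 2 →
      SolvesFrom u A c)
    (c : Config) (hp : Passive u c false) (hs : Cond.s2ne.sat (c.st true) (seenDir u A c true))
    (hd : seenDist u c true = D) : SolvesFrom u A c := by
  refine SolvesFrom.of_invariant (fun c => Passive u c false ∧
    Cond.s2ne.sat (c.st true) (seenDir u A c true) ∧ seenDist u c true = D) true ?_ ?_ c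
    ⟨hp, hs, hd⟩
  · rintro c act ⟨hp, hs, hd⟩ hidle
    have hgap : (stepConfig u A act c).gap = (1 : ℝ) • c.gap := by
      rw [stepConfig_gap false, hp.roundDecision_snd, Bool.not_false,
        roundDecision_of_not_act hidle, sub_zero, sub_zero]
    refine ⟨hp.stepConfig hgap (by norm_num), ?_, ?_⟩
    · rwa [stepConfig_st, roundDecision_of_not_act hidle,
        seenDir_of_gap_eq_smul_of_pos hgap one_pos]
    · rw [seenDist_of_gap_eq_smul hgap, abs_one, one_mul, hd]
  · rintro c act ⟨hp, ⟨d', hst, hne⟩, hd⟩ hact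
    have hdec : decision u A c true = if D < 1 then (.s3, 1/2) else (.s2 d', 1/2) := by
      rw [decision, hst, hd]
      split_ifs with h1
      · exact algo1_s2_of_lt_one hD h1 hne.symm
      · exact algo1_s2_of_one_le (not_lt.mp h1) hne.symm
    have hgap : (stepConfig u A act c).gap = (1/2 : ℝ) • c.gap := by
      rw [stepConfig_gap false, hp.roundDecision_snd, Bool.not_false, roundDecision_of_act hact,
        hdec]
      split_ifs <;> norm_num
    have hp' := hp.stepConfig hgap (by norm_num [abs_of_pos])
    have hd' : seenDist u (stepConfig u A act c) true = D / 2 := by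
      rw [seenDist_of_gap_eq_smul hgap, hd, abs_of_pos (by norm_num : (0 : ℝ) < 1/2)]
      ring
    have hst' : (stepConfig u A act c).st true = if D < 1 then .s3 else .s2 d' := by
      rw [stepConfig_st, roundDecision_of_act hact, hdec]
      split_ifs <;> rfl
    split_ifs at hst' with h1
    · refine SolvesFrom.of_passive_of_jump false _ hp' ?_
      rw [Bool.not_false, decision, hst', algo1_s3_of_quarter_le (by linarith)]
    · refine hhalf (not_lt.mp h1) _ hp' ⟨d', hst', ?_⟩ hd'
      rwa [seenDir_of_gap_eq_smul_of_pos hgap (by norm_num)]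

lemma SolvesFrom.of_passive_of_s2ne (c : Config) (hp : Passive u c false)
    (hs : Cond.s2ne.sat (c.st true) (seenDir u A c true)) (hd : 1/2 ≤ seenDist u c true) :
    SolvesFrom u A c := by
  obtain ⟨n, hn⟩ := pow_unbounded_of_one_lt (seenDist u c true) one_lt_two
  suffices ∀ n : ℕ, ∀ D, 1/2 ≤ D → D < 2 ^ n → ∀ c, Passive u c false →
      Cond.s2ne.sat (c.st true) (seenDir u A c true) → seenDist u c true = D →
      SolvesFrom u A c from
    this n _ hd hn c hp hs rfl
  intro n
  induction n with
  | zero =>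
    intro D hD hDn
    exact SolvesFrom.of_passive_of_s2ne_of_halving D hD fun h1 => absurd hDn (by norm_num [h1])
  | succ n ih =>
    intro D hD hDn
    rw [pow_succ] at hDn
    exact SolvesFrom.of_passive_of_s2ne_of_halving D hD fun _ =>
      ih (D / 2) (by linarith) (by linarith)

variable {act : Bool → Bool} {c : Config} {d' : Dir}

lemma roundDecision_of_s3_of_quarter_le {i : Bool} (hst : c.st i = .s3)
    (hd : 1/4 ≤ seenDist u c i) :
    roundDecision u A act c i = if act i then (.finish, 1) else (.s3, 0) := by
  unfold roundDecision
  split_ifs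
  · rw [decision, hst, algo1_s3_of_quarter_le hd]
  · rw [hst]

lemma SolvesFrom.stepConfig_of_s3_of_s2ne_of_lt_half (hr : c.st false = .s3)
    (hdr : 1/4 ≤ seenDist u c false) (hst : c.st true = .s2 d') (hne : seenDir u A c true ≠ d')
    (hds : seenDist u c true ≠ 0) (hds' : seenDist u c true < 1/2) (hact : act true = true) :
    SolvesFrom u A (stepConfig u A act c) := by
  have hs_dec : decision u A c true = (.finish, 0) := by
    rw [decision, hst, algo1_s2_of_lt_half hds hds' hne]
  have hgap : (stepConfig u A act c).gap = (if act false then 0 else 1 : ℝ) • c.gap := by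
    rw [stepConfig_gap false, roundDecision_of_s3_of_quarter_le hr hdr, Bool.not_false,
      roundDecision_of_act hact, hs_dec]
    split_ifs <;> norm_num
  cases hr_act : act false
  · rw [hr_act, if_neg Bool.false_ne_true] at hgap
    refine SolvesFrom.of_passive_of_jump true _ (Or.inl ⟨?_, ?_⟩) ?_
    · rw [stepConfig_st, roundDecision_of_act hact, hs_dec]
    · rw [seenDist_of_gap_eq_smul hgap, abs_one, one_mul]
      linarith
    · rw [Bool.not_true, decision_of_gap_eq (hgap.trans (one_smul _ _))
        (by rw [stepConfig_st, roundDecision_of_not_act hr_act]), decision, hr,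
        algo1_s3_of_quarter_le hdr]
  · rw [hr_act, if_pos rfl, zero_smul] at hgap
    exact SolvesFrom.of_gap_eq_zero hgap

lemma SolvesFrom.stepConfig_of_s3_of_s2ne_of_half_le (hr : c.st false = .s3)
    (hdr : 1/4 ≤ seenDist u c false) (hdr' : seenDist u c false < 1/2)
    (hst : c.st true = .s2 d') (hne : seenDir u A c true ≠ d') (hds : 1/2 ≤ seenDist u c true)
    (hact : act true = true) : SolvesFrom u A (stepConfig u A act c) := by
  have hs_dec : decision u A c true =
      if seenDist u c true < 1 then (.s3, 1/2) else (.s2 d', 1/2) := by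
    rw [decision, hst]
    split_ifs with h1
    · exact algo1_s2_of_lt_one hds h1 hne
    · exact algo1_s2_of_one_le (not_lt.mp h1) hne
  have hgap : (stepConfig u A act c).gap = (if act false then -1/2 else 1/2 : ℝ) • c.gap := by
    rw [stepConfig_gap false, roundDecision_of_s3_of_quarter_le hr hdr, Bool.not_false,
      roundDecision_of_act hact, hs_dec]
    split_ifs <;> norm_num
  have habs : |(if act false then -1/2 else 1/2 : ℝ)| = 1/2 := by split_ifs <;> norm_num
  have hp : Passive u (stepConfig u A act c) false := by
    rw [Passive, stepConfig_st, roundDecision_of_s3_of_quarter_le hr hdr,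
      seenDist_of_gap_eq_smul hgap, habs]
    split_ifs
    · exact Or.inl ⟨rfl, by linarith⟩
    · exact Or.inr ⟨rfl, by linarith⟩
  have hds' : seenDist u (stepConfig u A act c) true = seenDist u c true / 2 := by
    rw [seenDist_of_gap_eq_smul hgap, habs]
    ring
  have hst' : (stepConfig u A act c).st true = if seenDist u c true < 1 then .s3 else .s2 d' := by
    rw [stepConfig_st, roundDecision_of_act hact, hs_dec]
    split_ifs <;> rfl
  split_ifs at hst' with h1
  · refine SolvesFrom.of_passive_of_jump false _ hp ?_
    rw [Bool.not_false, decision, hst', algo1_s3_of_quarter_le (by linarith)]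
  cases hr_act : act false
  · rw [hr_act, if_neg Bool.false_ne_true] at hgap
    refine SolvesFrom.of_passive_of_s2ne _ hp ⟨d', hst', ?_⟩ (by linarith)
    rw [seenDir_of_gap_eq_smul_of_pos hgap (by norm_num)]
    exact hne.symm
  · rw [hr_act, if_pos rfl] at hgap
    -- `r` jumped over `s`, which now sees it on the side recorded in its state
    have hflip :=
      seenDir_of_gap_eq_smul_of_neg (A := A) hgap (by norm_num) (i := true) (by positivity)
    refine SolvesFrom.of_passive_of_jump false _ hp ?_
    rw [Bool.not_false, decision, hst', ← Dir.eq_of_ne_of_ne hflip hne.symm,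
      algo1_s2_self (by rw [hds']; positivity)]

lemma SolvesFrom.of_s3_of_s2ne (hu : u true ≠ 0) (hr : c.st false = .s3)
    (hdr : 1/4 ≤ seenDist u c false) (hdr' : seenDist u c false < 1/2)
    (hs : Cond.s2ne.sat (c.st true) (seenDir u A c true)) : SolvesFrom u A c := by
  obtain ⟨d', hst, hne⟩ := hs
  refine SolvesFrom.of_step fun act hact => ?_
  cases hs_act : act true
  · apply SolvesFrom.of_gap_eq_zero
    rw [stepConfig_gap false, roundDecision_of_s3_of_quarter_le hr hdr,
      if_pos (hact.resolve_right (by simp [hs_act])), Bool.not_false,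
      roundDecision_of_not_act hs_act]
    norm_num
  rcases lt_or_ge (seenDist u c true) (1/2) with hds | hds
  · have hds0 : seenDist u c true ≠ 0 :=
      seenDist_ne_zero_of_ne_zero hu (i := false) (by linarith)
    exact SolvesFrom.stepConfig_of_s3_of_s2ne_of_lt_half hr hdr hst hne.symm hds0 hds hs_act
  · exact SolvesFrom.stepConfig_of_s3_of_s2ne_of_half_le hr hdr hdr' hst hne.symm hds hs_act

end Rendezvous

/-- Lemma 6: `(S_3, S_2^≠, [1/4, 1/2), [0, ∞))↓`. -/
theorem lemma_l7 :
    Down Cond.s3 Cond.s2ne (Set.Ico (1/4 : ℝ) (1/2)) (Set.Ici (0 : ℝ)) := by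
  intro u A hu c hr hdr hs _
  exact SolvesFrom.of_s3_of_s2ne (hu true).ne' hr hdr.1 hdr.2 hs
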